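/- Let f : D̄ × ℝ → ℝ be continuous with continuous partial derivative D_u f, and let u, ū : D̄ → ℝ be continuous with u ≤ ū. Define U(x) = ((f(x, u(x)) − f(x, ū(x)))/(u(x) − ū(x)))^− when u(x) ≠ ū(x), and U(x) = (D_u f(x, u(x)))^− when u(x) = ū(x). Then U is continuous on D̄, and f(x, ū(x)) − f(x, u(x)) + U(x)(ū(x) − u(x)) ≥ 0 for all x ∈ D̄. -/

import Mathlib

/-!
Both branches of `U` are the negative part of one quantity, the derivative of `f x` averaged
along the segment from `u x` to `v x`,
`G x = ∫ t in 0..1, D_u f (x, u x + (v x - u x) t)`: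
by the fundamental theorem of calculus it is the difference quotient when `u x ≠ v x`, and it is
`D_u f (x, u x)` when the segment degenerates. As a parametric integral of a continuous integrand
`G` is continuous, hence so is `U = G⁻`. Finally `(v x - u x) G x = f (x, v x) - f (x, u x)`, so
the claimed quantity is `(v x - u x) (G x + (G x)⁻) = (v x - u x) (G x)⁺ ≥ 0`.
-/

open intervalIntegral Set Function MeasureTheory

theorem sub_smul_integral_deriv_comp_segment {E : Type*} [NormedAddCommGroup E]
    [NormedSpace ℝ E] [CompleteSpace E] {g g' : ℝ → E} {a b : ℝ}
    (hg : ∀ x ∈ uIcc a b, HasDerivAt g (g' x) x) (hg' : IntervalIntegrable g' volume a b) :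
    (b - a) • ∫ t in (0 : ℝ)..1, g' (a + (b - a) * t) = g b - g a := by
  rw [smul_integral_comp_add_mul, mul_zero, mul_one, add_zero, add_sub_cancel,
    integral_eq_sub_of_hasDerivAt hg hg']

theorem integral_deriv_comp_segment_eq_ite {g g' : ℝ → ℝ} {a b : ℝ}
    (hg : ∀ x ∈ uIcc a b, HasDerivAt g (g' x) x) (hg' : IntervalIntegrable g' volume a b) :
    ∫ t in (0 : ℝ)..1, g' (a + (b - a) * t) = if a ≠ b then (g a - g b) / (a - b) else g' a := by
  split_ifs with hab
  · have hFTC := sub_smul_integral_deriv_comp_segment hg hg'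
    rw [smul_eq_mul] at hFTC
    rw [eq_div_iff (sub_ne_zero.2 hab)]
    linarith
  · simp [not_not.1 hab]

theorem ContinuousOn.intervalIntegral_comp_segment {X E : Type*} [TopologicalSpace X]
    [NormedAddCommGroup E] [NormedSpace ℝ E] {F : X → ℝ → E} (hF : Continuous (uncurry F))
    {a b : X → ℝ} {s : Set X} (ha : ContinuousOn a s) (hb : ContinuousOn b s) :
    ContinuousOn (fun x => ∫ t in (0 : ℝ)..1, F x (a x + (b x - a x) * t)) s := by
  rw [continuousOn_iff_continuous_domRestrict] at *
  have ha' : Continuous fun p : s × ℝ => a p.1 := ha.comp continuous_fst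
  have hb' : Continuous fun p : s × ℝ => b p.1 := hb.comp continuous_fst
  exact continuous_parametric_intervalIntegral_of_continuous'
    (f := fun (x : s) t => F x (a x + (b x - a x) * t))
    (hF.comp₂ (continuous_subtype_val.comp continuous_fst)
      (ha'.add ((hb'.sub ha').mul continuous_snd))) 0 1

theorem potential_negative_part_continuous_general {d : ℕ}
    (D : Set (EuclideanSpace ℝ (Fin d)))
    (f fu : EuclideanSpace ℝ (Fin d) → ℝ → ℝ)
    (hfu : Continuous (fun p : EuclideanSpace ℝ (Fin d) × ℝ => fu p.1 p.2))
    (hderiv : ∀ x, ∀ q : ℝ, HasDerivAt (fun t => f x t) (fu x q) q)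
    (u v : EuclideanSpace ℝ (Fin d) → ℝ)
    (hu : ContinuousOn u D) (hv : ContinuousOn v D)
    (hle : ∀ x ∈ D, u x ≤ v x) :
    let U : EuclideanSpace ℝ (Fin d) → ℝ := fun x =>
      if u x ≠ v x then max (-((f x (u x) - f x (v x)) / (u x - v x))) 0
      else max (-(fu x (u x))) 0
    ContinuousOn U D ∧
    ∀ x ∈ D, 0 ≤ f x (v x) - f x (u x) + U x * (v x - u x) := by
  intro U
  set G := fun x => ∫ t in (0 : ℝ)..1, fu x (u x + (v x - u x) * t)
  have hint : ∀ x, IntervalIntegrable (fu x) volume (u x) (v x) := fun x =>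
    (hfu.uncurry_left x).intervalIntegrable _ _
  have hU : ∀ x, U x = (G x)⁻ := fun x => by
    simp only [U, G, integral_deriv_comp_segment_eq_ite (fun q _ => hderiv x q) (hint x)]
    split_ifs <;> rfl
  refine ⟨?_, fun x hx => ?_⟩
  · have hG : ContinuousOn G D := .intervalIntegral_comp_segment hfu hu hv
    exact ((continuous_neg.max continuous_const).comp_continuousOn hG).congr fun x _ => hU x
  · have hFTC := sub_smul_integral_deriv_comp_segment (fun q _ => hderiv x q) (hint x)
    rw [smul_eq_mul] at hFTC
    calc 0 ≤ (G x)⁺ * (v x - u x) := mul_nonneg (posPart_nonneg _) (sub_nonneg.2 (hle x hx))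
      _ = f x (v x) - f x (u x) + U x * (v x - u x) := by
        rw [← hFTC, hU]
        linear_combination (v x - u x) * posPart_sub_negPart (G x)

/-- Construction of the continuous potential `U` in Lemma 3.7: with
`U(x)` defined as the negative part of the difference quotient of `f` between
`u(x)` and `ū(x)` (resp. of `D_u f(x, u(x))` when they coincide), `U` is
continuous on the compact set `D` and
`f(x, ū(x)) - f(x, u(x)) + U(x)(ū(x) - u(x)) ≥ 0` on `D`. -/
theorem potential_negative_part_continuous {d : ℕ}
    (D : Set (EuclideanSpace ℝ (Fin d))) (hD : IsCompact D)
    (f fu : EuclideanSpace ℝ (Fin d) → ℝ → ℝ)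
    (hf : Continuous (fun p : EuclideanSpace ℝ (Fin d) × ℝ => f p.1 p.2))
    (hfu : Continuous (fun p : EuclideanSpace ℝ (Fin d) × ℝ => fu p.1 p.2))
    (hderiv : ∀ x, ∀ q : ℝ, HasDerivAt (fun t => f x t) (fu x q) q)
    (u v : EuclideanSpace ℝ (Fin d) → ℝ)
    (hu : ContinuousOn u D) (hv : ContinuousOn v D)
    (hle : ∀ x ∈ D, u x ≤ v x) :
    let U : EuclideanSpace ℝ (Fin d) → ℝ := fun x =>
      if u x ≠ v x then max (-((f x (u x) - f x (v x)) / (u x - v x))) 0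
      else max (-(fu x (u x))) 0
    ContinuousOn U D ∧
    ∀ x ∈ D, 0 ≤ f x (v x) - f x (u x) + U x * (v x - u x) :=
  potential_negative_part_continuous_general D f fu hfu hderiv u v hu hv hle
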